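/- Let q be odd and A ∈ M_{d×d}(K_∞) symmetric. Then the Gaussian integral ∫_{𝕋^d} ψ(u^T A u) du equals the product over i from 1 to d of 𝒢(λ_i), where λ_1,…,λ_d are the diagonal entries of γ^T A γ for any γ ∈ GL_d(O_∞) diagonalizing A, and 𝒢(f) denotes the one-dimensional Gaussian integral ∫_𝕋 ψ(f u²) du. -/

import Mathlib

/-!
Common setup: `K_∞ = 𝔽_q((1/t))` is modeled as `LaurentSeries Fq` in the variable `X = 1/t`,
so that an element `Σ_{i ≤ N} a_i t^i` of `K_∞` corresponds to the Hahn series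
`Σ_{n ≥ -N} a_{-n} X^n`.  The degree in `t` is the negative of the Hahn-series order,
the absolute value is `|α| = q^{deg_t α}`, and the standard additive character is
`ψ(α) = e_q(coefficient of t^{-1}) = e_q(coefficient of X^1)`.
-/

open scoped BigOperators Classical
noncomputable section



namespace FF

variable {Fq : Type*} [Field Fq] [Fintype Fq]

/-- The element `t = X⁻¹` of `K_∞`. -/
def tK : LaurentSeries Fq := HahnSeries.single (-1 : ℤ) 1

/-- Degree in `t` of a Laurent series (degree of `0` is `0` by convention). -/
def tdeg (α : LaurentSeries Fq) : ℤ := -α.order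

/-- The absolute value `|α| = q^{deg_t α}` on `K_∞`, with `|0| = 0`. -/
def absv (α : LaurentSeries Fq) : ℝ :=
  if α = 0 then 0 else (Fintype.card Fq : ℝ) ^ (-α.order)

/-- The embedding `𝔽_q[t] → K_∞`. -/
def toK (p : Polynomial Fq) : LaurentSeries Fq := Polynomial.eval₂ HahnSeries.C tK p

/-- The standard additive character `ψ` of `K_∞` attached to a character `e` of `𝔽_q`. -/
def psi (e : AddChar Fq ℂ) (α : LaurentSeries Fq) : ℂ := e (α.coeff 1)

/-- The polynomial `Σ_{i<N} c_i t^i` attached to a coefficient tuple. -/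
def polyOf {N : ℕ} (c : Fin N → Fq) : Polynomial Fq :=
  ∑ i : Fin N, Polynomial.C (c i) * Polynomial.X ^ (i : ℕ)

/-- Absolute value of a polynomial: `|p| = q^{deg p}`, `|0| = 0`. -/
def absP (p : Polynomial Fq) : ℝ :=
  if p = 0 then 0 else (Fintype.card Fq : ℝ) ^ p.natDegree

/-- The part `((γ))` of `γ` supported in strictly negative `t`-degrees. -/
def fracPart (γ : LaurentSeries Fq) : LaurentSeries Fq where
  coeff n := if 1 ≤ n then γ.coeff n else 0
  isPWO_support' := γ.isPWO_support'.mono (fun n hn => by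
    by_cases h : (1 : ℤ) ≤ n <;> simp_all [Function.support])

/-- A canonical choice of inverse of `x` modulo `c` (junk value `0` if not coprime). -/
def modInv (x c : Polynomial Fq) : Polynomial Fq :=
  if h : IsCoprime x c then h.choose else 0

/-- Riemann sums approximating the Haar integral (normalized by `μ(𝕋) = 1`) of `w`
over the ball `{|α| < q^Y}`, at resolution `M`: the ball is partitioned into `q^M`
sub-balls of measure `q^{Y-M}` with representatives `Σ_{0 ≤ j < M} c_j t^{Y-1-j}`. -/
def ballSum (Y : ℤ) (M : ℕ) (w : LaurentSeries Fq → ℂ) : ℂ :=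
  ((Fintype.card Fq : ℂ) ^ Y * ((Fintype.card Fq : ℂ) ^ M)⁻¹) *
    ∑ c : Fin M → Fq, w (∑ j : Fin M, HahnSeries.single ((1 : ℤ) - Y + (j : ℕ)) (c j))

/-- Riemann sums approximating the Haar integral of `w` over `𝕋^d` at resolution `M`. -/
def cubeSum (d M : ℕ) (w : (Fin d → LaurentSeries Fq) → ℂ) : ℂ :=
  (((Fintype.card Fq : ℂ) ^ (d * M))⁻¹) *
    ∑ c : Fin d → Fin M → Fq,
      w (fun i => ∑ j : Fin M, HahnSeries.single (((j : ℕ) : ℤ) + 1) (c i j))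

end FF

namespace FF
variable {Fq : Type*} [Field Fq] [Fintype Fq]

/-- The Gauss sum `G(f) = Σ_{x ∈ 𝔽_q} e_q(a_f x²)` attached to the top-degree (in `t`)
coefficient `a_f` of `f`. -/
def gaussSumTop (e : AddChar Fq ℂ) (f : LaurentSeries Fq) : ℂ :=
  ∑ x : Fq, e (f.coeff f.order * x ^ 2)

/-- The one-dimensional Gaussian integral factor `𝒢(f)`:
`min(|f|^{-1/2},1)` if `ord f` is even, `|f|^{-1/2} ε_f` if `ord f ≥ 1` is odd,
and `1` otherwise. -/
def gaussFactor (e : AddChar Fq ℂ) (f : LaurentSeries Fq) : ℂ :=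
  if f = 0 then 1
  else if Even (tdeg f) then ((min ((Real.sqrt (absv f))⁻¹) 1 : ℝ) : ℂ)
  else if 1 ≤ tdeg f then
    (((Real.sqrt (absv f))⁻¹ : ℝ) : ℂ) * (gaussSumTop e f / ‖gaussSumTop e f‖)
  else 1

end FF

/-!
Once `𝔭^(-M)` contains the entries of `A`, the integrand `ψ(uᵀAu)` is invariant under
translating `u ∈ 𝕋^d` by `(𝔭^(M+1))^d`, and the Riemann sum `cubeSum d M` samples exactly one
point in each coset. Since `γ` and `γ⁻¹` have entries in `O_∞`, `u ↦ γu` permutes these cosets,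
so the Riemann sum of `ψ(uᵀAu)` equals that of `ψ(uᵀDu)` with `D = γᵀAγ` diagonal, which is a
product of one-dimensional sums. For `|f| = q^n` the one-dimensional sum of `ψ(f u²)` is a
character sum of the quadratic form of the `n × n` Hankel matrix whose `(j, k)` entry is the
coefficient of `t^(j+k+1)` in `f`. This matrix is anti-triangular: summing out the last
variable forces the first one to vanish, which lowers `n` by two at the cost of a factor `q`,
until either nothing (`n` even) or a Gauss sum `∑ₓ e(a x²)` of absolute value `√q` (`n` odd)
remains. The Riemann sums are thus eventually constant.
-/

namespace Matrix

theorem inv_apply_mem {K : Type*} [Field K] {ι : Type*} [Fintype ι] [DecidableEq ι]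
    {S : Subring K} {γ : Matrix ι ι K} (hγ : ∀ i j, γ i j ∈ S) (hdet : γ.det⁻¹ ∈ S) (i j : ι) :
    γ⁻¹ i j ∈ S := by
  let γS : Matrix ι ι S := fun i j => ⟨γ i j, hγ i j⟩
  have hadj : γ.adjugate = S.subtype.mapMatrix γS.adjugate := by
    rw [RingHom.map_adjugate]; rfl
  rw [Matrix.inv_def, Ring.inverse_eq_inv', Matrix.smul_apply, hadj, smul_eq_mul]
  exact S.mul_mem hdet (γS.adjugate i j).2

theorem mulVec_dotProduct_mulVec_mulVec {ι R : Type*} [Fintype ι] [CommSemiring R]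
    (A γ : Matrix ι ι R) (u : ι → R) :
    (γ *ᵥ u) ⬝ᵥ A *ᵥ (γ *ᵥ u) = u ⬝ᵥ (γᵀ * A * γ) *ᵥ u := by
  rw [Matrix.mul_assoc, ← mulVec_mulVec, dotProduct_mulVec u γᵀ, vecMul_transpose, mulVec_mulVec]

end Matrix

theorem sum_pi_fin_succ_snoc {α β : Type*} [Fintype α] [AddCommMonoid β] {n : ℕ}
    (F : (Fin (n + 1) → α) → β) : ∑ c, F c = ∑ t : α, ∑ x : Fin n → α, F (Fin.snoc x t) := by
  rw [← (Fin.snocEquiv fun _ => α).sum_comp, Fintype.sum_prod_type]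
  rfl

theorem sum_pi_fin_succ_cons {α β : Type*} [Fintype α] [AddCommMonoid β] {n : ℕ}
    (F : (Fin (n + 1) → α) → β) : ∑ c, F c = ∑ s : α, ∑ y : Fin n → α, F (Fin.cons s y) := by
  rw [← (Fin.consEquiv fun _ => α).sum_comp, Fintype.sum_prod_type]
  rfl

namespace FF

open Matrix

variable {Fq : Type*} [Field Fq]

-- `orderGE k` is the fractional ideal `𝔭^k = t^(-k) O_∞ = {α : |α| ≤ q^(-k)}`.
def orderGE (k : ℤ) : AddSubgroup (LaurentSeries Fq) where
  carrier := {x | (k : WithTop ℤ) ≤ x.orderTop}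
  zero_mem' := by simp
  add_mem' {x y} hx hy := show (k : WithTop ℤ) ≤ (x + y).orderTop from
    (le_min hx hy).trans HahnSeries.min_orderTop_le_orderTop_add
  neg_mem' {x} hx := show (k : WithTop ℤ) ≤ (-x).orderTop by rwa [HahnSeries.orderTop_neg]

theorem mem_orderGE_iff_le_orderTop {k : ℤ} {x : LaurentSeries Fq} :
    x ∈ orderGE k ↔ (k : WithTop ℤ) ≤ x.orderTop := Iff.rfl

theorem mem_orderGE {k : ℤ} {x : LaurentSeries Fq} :
    x ∈ orderGE k ↔ ∀ n < k, x.coeff n = 0 := by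
  rw [mem_orderGE_iff_le_orderTop, HahnSeries.le_orderTop_iff_forall]
  simp

theorem orderGE_antitone : Antitone (orderGE (Fq := Fq)) := fun _ _ hkl _ hx =>
  mem_orderGE_iff_le_orderTop.2 ((WithTop.coe_le_coe.2 hkl).trans hx)

theorem mul_mem_orderGE {k l : ℤ} {x y : LaurentSeries Fq} (hx : x ∈ orderGE k)
    (hy : y ∈ orderGE l) : x * y ∈ orderGE (k + l) :=
  calc ((k + l : ℤ) : WithTop ℤ) = k + l := WithTop.coe_add k l
    _ ≤ x.orderTop + y.orderTop := add_le_add hx hy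
    _ ≤ (x * y).orderTop := HahnSeries.orderTop_add_le_mul

theorem mulVec_mem_orderGE {ι : Type*} [Fintype ι] {k l : ℤ}
    {B : Matrix ι ι (LaurentSeries Fq)} {v : ι → LaurentSeries Fq}
    (hB : ∀ i j, B i j ∈ orderGE k) (hv : ∀ i, v i ∈ orderGE l) (i : ι) :
    (B *ᵥ v) i ∈ orderGE (k + l) :=
  sum_mem fun j _ => mul_mem_orderGE (hB i j) (hv j)

theorem dotProduct_mem_orderGE {ι : Type*} [Fintype ι] {k l : ℤ}
    {u v : ι → LaurentSeries Fq} (hu : ∀ i, u i ∈ orderGE k) (hv : ∀ i, v i ∈ orderGE l) :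
    u ⬝ᵥ v ∈ orderGE (k + l) :=
  sum_mem fun i _ => mul_mem_orderGE (hu i) (hv i)

theorem exists_mem_orderGE (x : LaurentSeries Fq) : ∃ k, x ∈ orderGE k :=
  ⟨x.order, mem_orderGE.2 fun _ => HahnSeries.coeff_eq_zero_of_lt_order⟩

theorem eventually_mem_orderGE_neg (x : LaurentSeries Fq) :
    ∀ᶠ M : ℕ in Filter.atTop, x ∈ orderGE (-M) := by
  obtain ⟨k, hk⟩ := exists_mem_orderGE x
  filter_upwards [Filter.eventually_ge_atTop (-k).toNat] with M hM
  exact orderGE_antitone (by omega) hk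

theorem coeff_eq_zero_of_tdeg_le {f : LaurentSeries Fq} {m : ℕ} (hm : tdeg f ≤ m) :
    f.coeff (-1 - m) = 0 :=
  HahnSeries.coeff_eq_zero_of_lt_order (by rw [tdeg] at hm; omega)

-- The valuation ring `O_∞ = 𝔽_q[[1/t]]` of `K_∞`.
def integers : Subring (LaurentSeries Fq) where
  __ := orderGE 0
  one_mem' := mem_orderGE.2 fun n hn => by rw [HahnSeries.coeff_one, if_neg hn.ne]
  mul_mem' hx hy := by simpa using mul_mem_orderGE hx hy

-- The sample points of `cubeSum` and `ballSum 0`: representatives of `𝕋 / 𝔭^(M+1)`.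
def samplePoint {M : ℕ} (c : Fin M → Fq) : LaurentSeries Fq :=
  ∑ j : Fin M, HahnSeries.single (((j : ℕ) : ℤ) + 1) (c j)

def window (M : ℕ) (x : LaurentSeries Fq) : Fin M → Fq :=
  fun j => x.coeff (((j : ℕ) : ℤ) + 1)

theorem coeff_samplePoint_of_lt_one {M : ℕ} (c : Fin M → Fq) {n : ℤ} (hn : n < 1) :
    (samplePoint c).coeff n = 0 := by
  simp only [samplePoint, HahnSeries.coeff_sum, HahnSeries.coeff_single]
  exact Finset.sum_eq_zero fun j _ => if_neg (by omega)

theorem window_samplePoint {M : ℕ} (c : Fin M → Fq) : window M (samplePoint c) = c := by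
  funext j
  simp [window, samplePoint, HahnSeries.coeff_single, Fin.val_inj]

theorem samplePoint_mem_orderGE_one {M : ℕ} (c : Fin M → Fq) : samplePoint c ∈ orderGE 1 :=
  mem_orderGE.2 fun _ => coeff_samplePoint_of_lt_one c

theorem sub_samplePoint_window_mem {M : ℕ} {x : LaurentSeries Fq} (hx : x ∈ orderGE 1) :
    x - samplePoint (window M x) ∈ orderGE (M + 1) := by
  refine mem_orderGE.2 fun n hn => ?_
  rw [HahnSeries.coeff_sub]
  rcases lt_or_ge n 1 with h1 | h1
  · rw [mem_orderGE.1 hx n h1, coeff_samplePoint_of_lt_one _ h1, sub_self]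
  · obtain ⟨j, rfl⟩ : ∃ j : ℕ, n = j + 1 := ⟨(n - 1).toNat, by omega⟩
    have hj : j < M := by omega
    exact sub_eq_zero.2 (congrFun (window_samplePoint (window M x)) ⟨j, hj⟩).symm

theorem window_eq_of_sub_mem {M : ℕ} {x y : LaurentSeries Fq} (h : x - y ∈ orderGE (M + 1)) :
    window M x = window M y := by
  funext j
  have := mem_orderGE.1 h _ (by omega : ((j : ℕ) : ℤ) + 1 < M + 1)
  rwa [HahnSeries.coeff_sub, sub_eq_zero] at this

theorem psi_sum {ι : Type*} (e : AddChar Fq ℂ) (s : Finset ι) (f : ι → LaurentSeries Fq) :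
    psi e (∑ i ∈ s, f i) = ∏ i ∈ s, psi e (f i) := by
  simp only [psi, HahnSeries.coeff_sum]
  exact map_prod e.toMonoidHom (fun i => Multiplicative.ofAdd ((f i).coeff 1)) s

theorem psi_eq_of_sub_mem (e : AddChar Fq ℂ) {x y : LaurentSeries Fq}
    (h : x - y ∈ orderGE 2) : psi e x = psi e y := by
  have := mem_orderGE.1 h 1 one_lt_two
  rw [HahnSeries.coeff_sub, sub_eq_zero] at this
  rw [psi, psi, this]

theorem psi_dotProduct_mulVec_eq {ι : Type*} [Fintype ι] (e : AddChar Fq ℂ) {M : ℕ}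
    {A : Matrix ι ι (LaurentSeries Fq)} (hA : ∀ i j, A i j ∈ orderGE (-M))
    {x y : ι → LaurentSeries Fq} (hx : ∀ i, x i ∈ orderGE 1) (hy : ∀ i, y i ∈ orderGE 1)
    (hxy : ∀ i, x i - y i ∈ orderGE (M + 1)) :
    psi e (x ⬝ᵥ A *ᵥ x) = psi e (y ⬝ᵥ A *ᵥ y) := by
  refine psi_eq_of_sub_mem e ?_
  have hexp : x ⬝ᵥ A *ᵥ x - y ⬝ᵥ A *ᵥ y = (x - y) ⬝ᵥ A *ᵥ x + y ⬝ᵥ A *ᵥ (x - y) := by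
    rw [sub_dotProduct, mulVec_sub, dotProduct_sub]
    ring
  have h₁ := dotProduct_mem_orderGE hxy (mulVec_mem_orderGE hA hx)
  have h₂ := dotProduct_mem_orderGE hy (mulVec_mem_orderGE hA hxy)
  rw [hexp]
  exact add_mem (orderGE_antitone (by omega) h₁) (orderGE_antitone (by omega) h₂)

theorem psi_dotProduct_diagonal_mulVec {ι : Type*} [Fintype ι] [DecidableEq ι]
    (e : AddChar Fq ℂ) (v u : ι → LaurentSeries Fq) :
    psi e (u ⬝ᵥ diagonal v *ᵥ u) = ∏ i, psi e (v i * u i ^ 2) := by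
  simp only [dotProduct, mulVec_diagonal, psi_sum]
  exact Finset.prod_congr rfl fun i _ => by ring_nf

def hankelForm (a : ℕ → Fq) {n : ℕ} (c : Fin n → Fq) : Fq :=
  ∑ j : Fin n, ∑ k : Fin n, a (j + k) * c j * c k

theorem hankelForm_snoc (a : ℕ → Fq) {n : ℕ} (x : Fin n → Fq) (t : Fq) :
    hankelForm a (Fin.snoc x t : Fin (n + 1) → Fq) =
      hankelForm a x + t * (2 * ∑ j : Fin n, a (j + n) * x j) + a (n + n) * t ^ 2 := by
  simp only [hankelForm, Fin.sum_univ_castSucc, Fin.snoc_castSucc, Fin.snoc_last,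
    Fin.val_castSucc, Fin.val_last, Finset.sum_add_distrib]
  have hsymm : ∑ k : Fin n, a (n + k) * t * x k = ∑ j : Fin n, a (j + n) * x j * t :=
    Finset.sum_congr rfl fun j _ => by rw [add_comm n]; ring
  rw [hsymm, ← Finset.sum_mul]
  ring

theorem hankelForm_cons_zero (a : ℕ → Fq) {n : ℕ} (y : Fin n → Fq) :
    hankelForm a (Fin.cons 0 y : Fin (n + 1) → Fq) = hankelForm (fun m => a (m + 2)) y := by
  simp only [hankelForm, Fin.sum_univ_succ, Fin.cons_zero, Fin.cons_succ, Fin.val_succ,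
    mul_zero, zero_mul, Finset.sum_const_zero, zero_add]
  have hidx : ∀ j k : ℕ, j + 1 + (k + 1) = j + k + 2 := by omega
  simp only [hidx]

theorem coeff_one_mul_samplePoint_sq (f : LaurentSeries Fq) {M : ℕ} (c : Fin M → Fq) :
    (f * samplePoint c ^ 2).coeff 1 = hankelForm (fun m => f.coeff (-1 - m)) c := by
  have hcoeff : ∀ (x : LaurentSeries Fq) (j : Fin M) (n : ℤ),
      (x * HahnSeries.single (((j : ℕ) : ℤ) + 1) (c j)).coeff n =
        x.coeff (n - ((j : ℕ) + 1)) * c j := fun x j n => by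
    rw [← HahnSeries.coeff_mul_single_add, sub_add_cancel]
  simp only [samplePoint, sq, ← mul_assoc, Finset.mul_sum, HahnSeries.coeff_sum, hcoeff,
    Finset.sum_mul, hankelForm]
  rw [Finset.sum_comm]
  refine Finset.sum_congr rfl fun j _ => Finset.sum_congr rfl fun k _ => ?_
  rw [show (1 : ℤ) - ((k : ℕ) + 1) - ((j : ℕ) + 1) = -1 - ((j + k : ℕ) : ℤ) by push_cast; ring]

variable [Fintype Fq]

theorem absv_of_ne_zero {x : LaurentSeries Fq} (hx : x ≠ 0) :
    absv x = (Fintype.card Fq : ℝ) ^ tdeg x := if_neg hx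

theorem absv_of_tdeg_eq {f : LaurentSeries Fq} {n : ℕ} (hn : 0 < n) (hf : tdeg f = n) :
    f ≠ 0 ∧ absv f = (Fintype.card Fq : ℝ) ^ n := by
  have hf0 : f ≠ 0 := by rintro rfl; simp [tdeg] at hf; omega
  exact ⟨hf0, by rw [absv_of_ne_zero hf0, hf, zpow_natCast]⟩

theorem mem_integers_of_absv_le_one {x : LaurentSeries Fq} (hx : absv x ≤ 1) : x ∈ integers := by
  rcases eq_or_ne x 0 with rfl | hx0
  · exact zero_mem _
  have hq : (1 : ℝ) < Fintype.card Fq := mod_cast Fintype.one_lt_card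
  rw [absv_of_ne_zero hx0, zpow_le_one_iff_right₀ hq, tdeg, neg_nonpos] at hx
  exact mem_orderGE.2 fun _ hn => HahnSeries.coeff_eq_zero_of_lt_order (hn.trans_le hx)

theorem inv_mem_integers_of_absv_eq_one {x : LaurentSeries Fq} (hx : absv x = 1) :
    x⁻¹ ∈ integers := by
  have hx0 : x ≠ 0 := by rintro rfl; simp [absv] at hx
  have hq : (1 : ℝ) < Fintype.card Fq := mod_cast Fintype.one_lt_card
  rw [absv_of_ne_zero hx0, zpow_eq_one_iff_right₀ (by positivity) hq.ne', tdeg,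
    neg_eq_zero] at hx
  have h := HahnSeries.order_mul hx0 (inv_ne_zero hx0)
  rw [mul_inv_cancel₀ hx0, HahnSeries.order_one, hx, zero_add] at h
  exact mem_orderGE.2 fun _ hn => HahnSeries.coeff_eq_zero_of_lt_order (hn.trans_eq h)

theorem two_ne_zero_of_odd_card (hq : Odd (Fintype.card Fq)) : (2 : Fq) ≠ 0 :=
  Ring.two_ne_zero fun h => by
    have := FiniteField.even_card_iff_char_two.1 h
    rw [Nat.odd_iff] at hq
    omega

theorem norm_sum_addChar_mul_sq {e : AddChar Fq ℂ} (he : e ≠ 1) (h2 : (2 : Fq) ≠ 0) {b : Fq}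
    (hb : b ≠ 0) : ‖∑ x, e (b * x ^ 2)‖ = √(Fintype.card Fq) := by
  classical
  set G := ∑ x, e (b * x ^ 2)
  have hprim := AddChar.IsPrimitive.of_ne_one he
  -- substituting `x = y + h` in `∑_{x,y} e(b x² - b y²)` leaves a linear character sum in `y`
  have hGG : G * (starRingEnd ℂ) G = Fintype.card Fq :=
    calc G * (starRingEnd ℂ) G = ∑ y, ∑ x, e (b * x ^ 2) * e (-(b * y ^ 2)) := by
          simp only [G, map_sum, ← AddChar.map_neg_eq_conj, Finset.sum_mul_sum]
          exact Finset.sum_comm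
      _ = ∑ y, ∑ h, e (b * h ^ 2) * e (y * (2 * b * h)) := by
          refine Finset.sum_congr rfl fun y _ => ?_
          rw [← Equiv.sum_comp (Equiv.addRight y)]
          refine Finset.sum_congr rfl fun h _ => ?_
          simp only [Equiv.coe_addRight, ← AddChar.map_add_eq_mul]
          ring_nf
      _ = ∑ h, e (b * h ^ 2) * ∑ y, e (y * (2 * b * h)) := by
          rw [Finset.sum_comm]
          simp only [Finset.mul_sum]
      _ = Fintype.card Fq := by
          simp [AddChar.sum_mulShift _ hprim, h2, hb]
  rw [Complex.mul_conj, Complex.normSq_eq_norm_sq] at hGG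
  rw [← Real.sqrt_sq (norm_nonneg G)]
  exact congrArg _ (mod_cast hGG)

def hankelSum (e : AddChar Fq ℂ) (n : ℕ) (a : ℕ → Fq) : ℂ :=
  ∑ c : Fin n → Fq, e (hankelForm a c)

theorem hankelSum_zero (e : AddChar Fq ℂ) (a : ℕ → Fq) : hankelSum e 0 a = 1 := by
  simp [hankelSum, hankelForm]

theorem hankelSum_succ_of_vanish (e : AddChar Fq ℂ) {n : ℕ} {a : ℕ → Fq}
    (ha : ∀ m, n ≤ m → a m = 0) : hankelSum e (n + 1) a = Fintype.card Fq * hankelSum e n a := by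
  have hQ : ∀ (x : Fin n → Fq) t, hankelForm a (Fin.snoc x t : Fin (n + 1) → Fq) = hankelForm a x :=
    fun x t => by simp [hankelForm_snoc, ha]
  simp [hankelSum, sum_pi_fin_succ_snoc, hQ]

theorem hankelSum_add_of_vanish (e : AddChar Fq ℂ) {n : ℕ} {a : ℕ → Fq}
    (ha : ∀ m, n ≤ m → a m = 0) (j : ℕ) :
    hankelSum e (n + j) a = (Fintype.card Fq : ℂ) ^ j * hankelSum e n a := by
  induction j with
  | zero => simp
  | succ j ih =>
    rw [← add_assoc, hankelSum_succ_of_vanish e fun m hm => ha m (by omega), ih, pow_succ]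
    ring

theorem hankelSum_add_two {e : AddChar Fq ℂ} (he : e ≠ 1) (h2 : (2 : Fq) ≠ 0) {n : ℕ}
    {a : ℕ → Fq} (ha : ∀ m, n + 2 ≤ m → a m = 0) (hlead : a (n + 1) ≠ 0) :
    hankelSum e (n + 2) a = Fintype.card Fq * hankelSum e n (fun m => a (m + 2)) := by
  classical
  have hQ : ∀ (x : Fin (n + 1) → Fq) t, hankelForm a (Fin.snoc x t : Fin (n + 2) → Fq) =
      hankelForm a x + t * (2 * a (n + 1) * x 0) := fun x t => by
    have hz : ∀ j : Fin n, a (j + 1 + (n + 1)) = 0 := fun j => ha _ (by omega)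
    simp [hankelForm_snoc, Fin.sum_univ_succ, hz, ha (n + 1 + (n + 1)) (by omega), mul_assoc]
  have hsum : ∀ x : Fin (n + 1) → Fq, ∑ t, e (hankelForm a (Fin.snoc x t : Fin (n + 2) → Fq)) =
      if x 0 = 0 then e (hankelForm a x) * Fintype.card Fq else 0 := fun x => by
    simp only [hQ, AddChar.map_add_eq_mul, ← Finset.mul_sum,
      AddChar.sum_mulShift _ (AddChar.IsPrimitive.of_ne_one he)]
    simp [h2, hlead]
  rw [hankelSum, sum_pi_fin_succ_snoc, Finset.sum_comm]
  simp only [hsum]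
  rw [sum_pi_fin_succ_cons]
  simp [hankelForm_cons_zero, hankelSum, Finset.mul_sum, mul_comm]

theorem hankelSum_two_mul_add_one {e : AddChar Fq ℂ} (he : e ≠ 1) (h2 : (2 : Fq) ≠ 0) :
    ∀ (k : ℕ) {a : ℕ → Fq}, (∀ m, 2 * k + 1 ≤ m → a m = 0) → a (2 * k) ≠ 0 →
      hankelSum e (2 * k + 1) a = (Fintype.card Fq : ℂ) ^ k * ∑ x, e (a (2 * k) * x ^ 2)
  | 0, a, _, _ => by
    rw [hankelSum, ← (Equiv.funUnique (Fin 1) Fq).symm.sum_comp]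
    simp [hankelForm, sq, mul_assoc]
  | k + 1, a, ha, hlead => by
    rw [show 2 * (k + 1) + 1 = 2 * k + 1 + 2 by ring,
      hankelSum_add_two (n := 2 * k + 1) he h2 (fun m hm => ha m (by omega)) hlead,
      hankelSum_two_mul_add_one he h2 k (fun m hm => ha (m + 2) (by omega)) hlead, pow_succ,
      mul_add_one 2 k]
    ring

theorem hankelSum_two_mul_add_two {e : AddChar Fq ℂ} (he : e ≠ 1) (h2 : (2 : Fq) ≠ 0) :
    ∀ (k : ℕ) {a : ℕ → Fq}, (∀ m, 2 * k + 2 ≤ m → a m = 0) → a (2 * k + 1) ≠ 0 →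
      hankelSum e (2 * k + 2) a = (Fintype.card Fq : ℂ) ^ (k + 1)
  | 0, a, ha, hlead => by
    rw [hankelSum_add_two he h2 ha hlead, hankelSum_zero, pow_one, mul_one]
  | k + 1, a, ha, hlead => by
    rw [show 2 * (k + 1) + 2 = 2 * k + 2 + 2 by ring,
      hankelSum_add_two (n := 2 * k + 2) he h2 (fun m hm => ha m (by omega)) hlead,
      hankelSum_two_mul_add_two he h2 k (fun m hm => ha (m + 2) (by omega)) hlead, pow_succ]
    ring

theorem gaussFactor_of_tdeg_nonpos (e : AddChar Fq ℂ) {f : LaurentSeries Fq} (hf : tdeg f ≤ 0) :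
    gaussFactor e f = 1 := by
  rcases eq_or_ne f 0 with rfl | hf0
  · exact if_pos rfl
  have hq : (1 : ℝ) ≤ Fintype.card Fq := mod_cast Fintype.card_pos
  have habsv : √(absv f) ≤ 1 := Real.sqrt_le_one.2 <| by
    rw [absv_of_ne_zero hf0]; exact zpow_le_one_of_nonpos₀ hq hf
  have habsv_pos : 0 < √(absv f) := Real.sqrt_pos.2 <| by
    rw [absv_of_ne_zero hf0]; positivity
  rw [gaussFactor, if_neg hf0, min_eq_right ((one_le_inv₀ habsv_pos).2 habsv)]
  split_ifs with heven hpos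
  · exact Complex.ofReal_one
  · omega
  · rfl

theorem gaussFactor_of_tdeg_eq_two_mul_add_two (e : AddChar Fq ℂ) {f : LaurentSeries Fq} {k : ℕ}
    (hf : tdeg f = (2 * k + 2 : ℕ)) :
    gaussFactor e f = ((Fintype.card Fq : ℂ) ^ (k + 1))⁻¹ := by
  obtain ⟨hf0, habsv⟩ := absv_of_tdeg_eq (by omega) hf
  have hsqrt : √(absv f) = (Fintype.card Fq : ℝ) ^ (k + 1) := by
    rw [habsv, show 2 * k + 2 = (k + 1) * 2 by ring, pow_mul, Real.sqrt_sq (by positivity)]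
  have hle : ((Fintype.card Fq : ℝ) ^ (k + 1))⁻¹ ≤ 1 :=
    inv_le_one_of_one_le₀ (one_le_pow₀ (mod_cast Fintype.card_pos))
  rw [gaussFactor, if_neg hf0, if_pos (by rw [hf]; exact ⟨k + 1, by push_cast; ring⟩), hsqrt,
    min_eq_left hle]
  push_cast
  rfl

theorem gaussFactor_of_tdeg_eq_two_mul_add_one (e : AddChar Fq ℂ) {f : LaurentSeries Fq} {k : ℕ}
    (hf : tdeg f = (2 * k + 1 : ℕ)) (hG : ‖gaussSumTop e f‖ = √(Fintype.card Fq)) :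
    gaussFactor e f = ((Fintype.card Fq : ℂ) ^ (k + 1))⁻¹ * gaussSumTop e f := by
  obtain ⟨hf0, habsv⟩ := absv_of_tdeg_eq (by omega) hf
  have hsqrt : √(absv f) * √(Fintype.card Fq) = (Fintype.card Fq : ℝ) ^ (k + 1) := by
    rw [habsv, ← Real.sqrt_mul (by positivity), ← pow_succ,
      show 2 * k + 1 + 1 = (k + 1) * 2 by ring, pow_mul, Real.sqrt_sq (by positivity)]
  have hodd : ¬Even (tdeg f) := by rw [hf, Int.not_even_iff_odd]; exact ⟨k, by push_cast; ring⟩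
  rw [gaussFactor, if_neg hf0, if_neg hodd, if_pos (by omega), hG, div_eq_mul_inv, mul_comm,
    mul_assoc, ← Complex.ofReal_inv, ← Complex.ofReal_mul, ← mul_inv, mul_comm (√_), hsqrt]
  push_cast
  ring

theorem cubeSum_eq (d M : ℕ) (w : (Fin d → LaurentSeries Fq) → ℂ) :
    cubeSum d M w = ((Fintype.card Fq : ℂ) ^ (d * M))⁻¹ *
      ∑ c : Fin d → Fin M → Fq, w (fun i => samplePoint (c i)) := rfl

theorem ballSum_zero (M : ℕ) (w : LaurentSeries Fq → ℂ) :
    ballSum 0 M w = ((Fintype.card Fq : ℂ) ^ M)⁻¹ * ∑ c : Fin M → Fq, w (samplePoint c) := by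
  simp [ballSum, samplePoint, add_comm]

theorem cubeSum_prod (d M : ℕ) (w : Fin d → LaurentSeries Fq → ℂ) :
    cubeSum d M (fun u => ∏ i, w i (u i)) = ∏ i, ballSum 0 M (w i) := by
  simp only [cubeSum_eq, ballSum_zero, Finset.prod_mul_distrib, Fintype.prod_sum,
    Finset.prod_const, Finset.card_univ, Fintype.card_fin, ← inv_pow, ← pow_mul, mul_comm M]

theorem ballSum_psi_mul_sq_eq_hankelSum (e : AddChar Fq ℂ) (f : LaurentSeries Fq) (M : ℕ) :
    ballSum 0 M (fun x => psi e (f * x ^ 2)) =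
      ((Fintype.card Fq : ℂ) ^ M)⁻¹ * hankelSum e M (fun m => f.coeff (-1 - m)) := by
  simp only [ballSum_zero, psi, coeff_one_mul_samplePoint_sq]
  rfl

theorem ballSum_psi_mul_sq {e : AddChar Fq ℂ} (hq : Odd (Fintype.card Fq)) (he : e ≠ 1)
    {f : LaurentSeries Fq} {M : ℕ} (hM : tdeg f ≤ M) :
    ballSum 0 M (fun x => psi e (f * x ^ 2)) = gaussFactor e f := by
  rw [ballSum_psi_mul_sq_eq_hankelSum]
  set a : ℕ → Fq := fun m => f.coeff (-1 - m)
  have hq0 : (Fintype.card Fq : ℂ) ≠ 0 := mod_cast Fintype.card_ne_zero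
  have h2 := two_ne_zero_of_odd_card hq
  rcases le_or_gt (tdeg f) 0 with hf | hf
  · have ha : ∀ m, 0 ≤ m → a m = 0 := fun m _ =>
      coeff_eq_zero_of_tdeg_le (hf.trans (Nat.cast_nonneg m))
    rw [← zero_add M, hankelSum_add_of_vanish e ha, hankelSum_zero, zero_add, mul_one,
      inv_mul_cancel₀ (pow_ne_zero _ hq0), gaussFactor_of_tdeg_nonpos e hf]
  obtain ⟨n, hn⟩ : ∃ n : ℕ, tdeg f = n := ⟨(tdeg f).toNat, by omega⟩
  obtain ⟨j, rfl⟩ := Nat.exists_eq_add_of_le (show n ≤ M by omega)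
  have ha : ∀ m, n ≤ m → a m = 0 := fun m hm => coeff_eq_zero_of_tdeg_le (by omega)
  have hf0 : f ≠ 0 := (absv_of_tdeg_eq (by omega) hn).1
  have hlead : ∀ m, m + 1 = n → a m = f.coeff f.order := fun m hm => by
    simp only [a]; congr 1; rw [tdeg] at hn; omega
  have hlc : f.coeff f.order ≠ 0 := HahnSeries.coeff_order_eq_zero.not.2 hf0
  rw [hankelSum_add_of_vanish e ha]
  rcases Nat.even_or_odd' n with ⟨k, rfl | rfl⟩
  · obtain ⟨k, rfl⟩ : ∃ k', k = k' + 1 := ⟨k - 1, by omega⟩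
    rw [mul_add_one 2 k] at ha hn hlead ⊢
    rw [hankelSum_two_mul_add_two he h2 k ha (hlead _ rfl ▸ hlc),
      gaussFactor_of_tdeg_eq_two_mul_add_two e hn]
    field_simp
    ring
  · have hG : gaussSumTop e f = ∑ x, e (a (2 * k) * x ^ 2) := by rw [hlead _ rfl]; rfl
    rw [hankelSum_two_mul_add_one he h2 k ha (hlead _ rfl ▸ hlc),
      gaussFactor_of_tdeg_eq_two_mul_add_one e hn
        (hG ▸ norm_sum_addChar_mul_sq he h2 (hlead _ rfl ▸ hlc)), hG]
    field_simp
    ring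

theorem cubeSum_comp_mulVec {d M : ℕ} {w : (Fin d → LaurentSeries Fq) → ℂ}
    (hw : ∀ x y, (∀ i, x i ∈ orderGE 1) → (∀ i, y i ∈ orderGE 1) →
      (∀ i, x i - y i ∈ orderGE (M + 1)) → w x = w y)
    {γ η : Matrix (Fin d) (Fin d) (LaurentSeries Fq)} (hγ : ∀ i j, γ i j ∈ integers)
    (hη : ∀ i j, η i j ∈ integers) (hηγ : η * γ = 1) :
    cubeSum d M (fun u => w (γ *ᵥ u)) = cubeSum d M w := by
  set u : (Fin d → Fin M → Fq) → Fin d → LaurentSeries Fq := fun c i => samplePoint (c i)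
  have hu : ∀ c i, u c i ∈ orderGE 1 := fun c i => samplePoint_mem_orderGE_one _
  have hγu : ∀ c i, (γ *ᵥ u c) i ∈ orderGE 1 := fun c i => by
    simpa using mulVec_mem_orderGE hγ (hu c) i
  set g : (Fin d → Fin M → Fq) → Fin d → Fin M → Fq := fun c i => window M ((γ *ᵥ u c) i)
  have hg : ∀ c i, (γ *ᵥ u c) i - u (g c) i ∈ orderGE (M + 1) := fun c i =>
    sub_samplePoint_window_mem (hγu c i)
  have hg_inj : Function.Injective g := by
    intro c c' hcc'
    have hγ_sub : ∀ i, (γ *ᵥ (u c - u c')) i ∈ orderGE (M + 1) := fun i => by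
      have := sub_mem (hg c i) (hg c' i)
      rwa [hcc', sub_sub_sub_cancel_right, ← Pi.sub_apply, ← mulVec_sub] at this
    have hsub : ∀ i, u c i - u c' i ∈ orderGE (M + 1) := fun i => by
      simpa [mulVec_mulVec, hηγ] using mulVec_mem_orderGE hη hγ_sub i
    funext i
    rw [← window_samplePoint (c i), ← window_samplePoint (c' i)]
    exact window_eq_of_sub_mem (hsub i)
  have hg_bij : Function.Bijective g := Finite.injective_iff_bijective.1 hg_inj
  rw [cubeSum_eq, cubeSum_eq, ← hg_bij.sum_comp (fun c => w (u c))]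
  congr 1
  exact Finset.sum_congr rfl fun c _ => hw _ _ (hγu c) (hu (g c)) (hg c)

end FF

open FF Filter in
theorem gaussian_integral_matrix_general {Fq : Type*} [Field Fq] [Fintype Fq]
    (hq : Odd (Fintype.card Fq)) (e : AddChar Fq ℂ) (he : e ≠ 1) {d : ℕ}
    (A : Matrix (Fin d) (Fin d) (LaurentSeries Fq))
    (γ : Matrix (Fin d) (Fin d) (LaurentSeries Fq))
    (hγO : ∀ i j, absv (γ i j) ≤ 1) (hγdet : absv γ.det = 1)
    (hdiag : (γ.transpose * A * γ).IsDiag) :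
    Tendsto (fun M : ℕ =>
        cubeSum d M (fun u => psi e (dotProduct u (A.mulVec u)))) atTop
      (nhds (∏ i, gaussFactor e ((γ.transpose * A * γ) i i))) := by
  set D := γ.transpose * A * γ
  have hγ : ∀ i j, γ i j ∈ integers := fun i j => mem_integers_of_absv_le_one (hγO i j)
  have hdet0 : γ.det ≠ 0 := by rintro h; simp [h, absv] at hγdet
  have hγinv := Matrix.inv_apply_mem hγ (inv_mem_integers_of_absv_eq_one hγdet)
  have hinv_mul : γ⁻¹ * γ = 1 := Matrix.nonsing_inv_mul γ (isUnit_iff_ne_zero.2 hdet0)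
  refine tendsto_const_nhds.congr' ?_
  filter_upwards [eventually_all.2 fun i => eventually_all.2 fun j =>
      eventually_mem_orderGE_neg (A i j),
    eventually_all.2 fun i => eventually_ge_atTop (tdeg (D i i)).toNat] with M hA hD
  calc ∏ i, gaussFactor e (D i i)
      = ∏ i, ballSum 0 M (fun x => psi e (D i i * x ^ 2)) :=
        Finset.prod_congr rfl fun i _ => (ballSum_psi_mul_sq hq he (by have := hD i; omega)).symm
    _ = cubeSum d M (fun u => psi e (dotProduct u (D.mulVec u))) := by
        rw [← cubeSum_prod]
        conv_rhs => rw [← hdiag.diagonal_diag]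
        simp only [psi_dotProduct_diagonal_mulVec, Matrix.diag_apply]
    _ = cubeSum d M (fun u => psi e (dotProduct (γ.mulVec u) (A.mulVec (γ.mulVec u)))) := by
        simp only [Matrix.mulVec_dotProduct_mulVec_mulVec, D]
    _ = cubeSum d M (fun u => psi e (dotProduct u (A.mulVec u))) :=
        cubeSum_comp_mulVec (fun _ _ hx hy hxy => psi_dotProduct_mulVec_eq e hA hx hy hxy)
          hγ hγinv hinv_mul

open FF Filter in
/-- multi-dimensional Gaussian integral.  Let `q` be odd and `A` a
symmetric `d × d` matrix over `K_∞`.  Then the Gaussian integral `∫_{𝕋^d} ψ(uᵀAu) du`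
(computed as the limit of the Riemann sums `cubeSum`) equals `Π_i 𝒢(λ_i)`, where
`λ_1, …, λ_d` are the diagonal entries of `γᵀAγ` for any `γ ∈ GL_d(O_∞)` diagonalizing
`A`. -/
theorem gaussian_integral_matrix {Fq : Type*} [Field Fq] [Fintype Fq]
    (hq : Odd (Fintype.card Fq)) (e : AddChar Fq ℂ) (he : e ≠ 1) {d : ℕ}
    (A : Matrix (Fin d) (Fin d) (LaurentSeries Fq)) (hA : A.IsSymm)
    (γ : Matrix (Fin d) (Fin d) (LaurentSeries Fq))
    (hγO : ∀ i j, absv (γ i j) ≤ 1) (hγdet : absv γ.det = 1)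
    (hdiag : (γ.transpose * A * γ).IsDiag) :
    Tendsto (fun M : ℕ =>
        cubeSum d M (fun u => psi e (dotProduct u (A.mulVec u)))) atTop
      (nhds (∏ i, gaussFactor e ((γ.transpose * A * γ) i i))) :=
  gaussian_integral_matrix_general hq e he A γ hγO hγdet hdiag
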